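/- arXiv:2508.11496 — 5 statements merged into one kernel-verified Lean document; each statement's English description precedes it below -/
import Mathlib

section
/- For a nonzero vector v ∈ ℂ⁵, all five partial derivatives ∂e₃/∂xᵢ vanish at v if and only if v is a scalar multiple of one of the standard basis vectors e₁,…,e₅. Consequently the singular locus of the cubic threefold Y₁ consists of exactly the five coordinate points [1:0:0:0:0], [0:1:0:0:0], [0:0:1:0:0], [0:0:0:1:0], [0:0:0:0:1], which form a single 𝔄₅-orbit. -/
open Projectivization MvPolynomial

noncomputable section
set_option linter.unnecessarySeqFocus false

/-- ℂ⁵ -/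
abbrev V5 : Type := Fin 5 → ℂ

/-- ℙ⁴ = ℙ(ℂ⁵) -/
abbrev P4 : Type := Projectivization ℂ V5

/-- The linear automorphism of ℂ⁵ induced by a permutation of the coordinates. -/
def permLin (σ : Equiv.Perm (Fin 5)) : V5 ≃ₗ[ℂ] V5 :=
  LinearEquiv.funCongrLeft ℂ ℂ σ

/-- The induced map on ℙ⁴ of a linear automorphism of ℂ⁵. -/
def projMap (γ : V5 ≃ₗ[ℂ] V5) : P4 → P4 :=
  Projectivization.map γ.toLinearMap γ.injective

/-- The 𝔄₅-orbit of a point of ℙ⁴, for the action by even permutations of coordinates. -/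
def A5orbit (p : P4) : Set P4 :=
  { q | ∃ σ ∈ alternatingGroup (Fin 5), q = projMap (permLin σ) p }

/-- The third elementary symmetric function e₃ = Σ_{i<j<k} xᵢxⱼx_k on ℂ⁵. -/
def E3 (v : V5) : ℂ := ∑ s ∈ (Finset.univ : Finset (Fin 5)).powersetCard 3, ∏ i ∈ s, v i

/-- The cubic threefold Y₁ = {e₃ = 0} ⊂ ℙ⁴. -/
def Y1 : Set P4 :=
  { p | ∃ (v : V5) (hv : v ≠ 0), p = Projectivization.mk ℂ v hv ∧ E3 v = 0 }

/-- e₃ = Σ_{i<j<k} xᵢxⱼx_k as a polynomial. -/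
def e3Poly : MvPolynomial (Fin 5) ℂ :=
  ∑ s ∈ (Finset.univ : Finset (Fin 5)).powersetCard 3, ∏ i ∈ s, X i

/-- The set of singular points of the cubic threefold Y₁ = {e₃ = 0}. -/
def SingY1 : Set P4 :=
  { p | ∃ (v : V5) (hv : v ≠ 0), p = Projectivization.mk ℂ v hv ∧
      ∀ i : Fin 5, eval v (pderiv i e3Poly) = 0 }

lemma single_one_ne_zero (i : Fin 5) : (Pi.single i 1 : V5) ≠ 0 := by
  intro h
  have := congrFun h i
  simp at this

/-!
Write `s = ∑ vⱼ` and `q = ∑ vⱼ²`. Since `∂ᵢe₃(v)` is `e₂` of the coordinates other than `vᵢ`,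
the critical equations read `(s - vᵢ)² = q - vᵢ²`. Summing them over the five indices gives
`3 (s² - q) = 0`, after which each equation becomes `vᵢ (vᵢ - s) = 0`. So every coordinate is `0`
or `s`; here `s ≠ 0` (otherwise all `vᵢ² = 0`), and `∑ vⱼ = s` forces exactly one coordinate to
equal `s`. The five coordinate points form one `𝔄₅`-orbit because `𝔄₅` is transitive on five
letters.
-/

section CoordinateMultiples

variable {K ι : Type*} [Field K] [CharZero K] [Fintype ι] [DecidableEq ι]

theorem exists_eq_smul_single_of_forall_mul_sub_sum_eq_zero {v : ι → K} (hv : v ≠ 0)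
    (h : ∀ i, v i * (v i - ∑ j, v j) = 0) : ∃ (c : K) (i : ι), v = c • Pi.single i 1 := by
  classical
  set s := ∑ j, v j
  have hs : s ≠ 0 := by
    intro hs
    exact hv (funext fun i => by simpa [hs] using h i)
  have hv_of_ne : ∀ i, v i ≠ s → v i = 0 := fun i hi =>
    (mul_eq_zero.1 (h i)).resolve_right (sub_ne_zero.2 hi)
  set S := Finset.univ.filter (v · = s)
  have hsum : s = S.card * s := calc
    s = ∑ j ∈ S, v j := (Finset.sum_filter_of_ne fun j _ hj => by_contra (hj ∘ hv_of_ne j)).symm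
    _ = S.card * s := by
      rw [Finset.sum_congr rfl fun j hj => (Finset.mem_filter.1 hj).2, Finset.sum_const,
        nsmul_eq_mul]
  obtain ⟨i, hS⟩ : ∃ i, S = {i} :=
    Finset.card_eq_one.1 (Nat.cast_eq_one.1 (mul_eq_right₀ hs |>.1 hsum.symm) : S.card = 1)
  refine ⟨s, i, funext fun j => ?_⟩
  have hmem : v j = s ↔ j = i := by simpa [S] using Finset.ext_iff.1 hS j
  by_cases hji : j = i
  · subst hji
    simp [hmem.2 rfl]
  · simp [hv_of_ne j (hmem.not.2 hji), hji]

theorem forall_sum_sub_sq_eq_iff (hι : Fintype.card ι ≠ 2) {v : ι → K} (hv : v ≠ 0) :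
    (∀ i, (∑ j, v j - v i) ^ 2 = ∑ j, v j ^ 2 - v i ^ 2) ↔
      ∃ (c : K) (i : ι), v = c • Pi.single i 1 := by
  constructor
  · intro h
    set s := ∑ j, v j
    set q := ∑ j, v j ^ 2
    have hsq : ((Fintype.card ι : K) - 2) * (s ^ 2 - q) = 0 := by
      have := Finset.sum_congr rfl fun i (_ : i ∈ Finset.univ) => h i
      simp only [sub_sq, Finset.sum_add_distrib, Finset.sum_sub_distrib, ← Finset.mul_sum,
        Finset.sum_const, Finset.card_univ, nsmul_eq_mul] at this
      linear_combination this
    have hq : s ^ 2 = q := by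
      have hι' : (Fintype.card ι : K) - 2 ≠ 0 := sub_ne_zero.2 (by exact_mod_cast hι)
      linear_combination (mul_eq_zero.1 hsq).resolve_left hι'
    exact exists_eq_smul_single_of_forall_mul_sub_sum_eq_zero hv fun i => by
      linear_combination h i / 2 - hq / 2
  · rintro ⟨c, i, rfl⟩ j
    by_cases hji : j = i
    · subst hji; simp [Pi.single_apply]
    · simp [Pi.single_apply, hji]

end CoordinateMultiples

lemma e3Poly_eq : e3Poly = X 0*X 1*X 2 + X 0*X 1*X 3 + X 0*X 1*X 4 + X 0*X 2*X 3 + X 0*X 2*X 4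
    + X 0*X 3*X 4 + X 1*X 2*X 3 + X 1*X 2*X 4 + X 1*X 3*X 4 + X 2*X 3*X 4 := by
  rw [e3Poly, show (Finset.univ : Finset (Fin 5)).powersetCard 3 =
    {{0,1,2},{0,1,3},{0,1,4},{0,2,3},{0,2,4},{0,3,4},{1,2,3},{1,2,4},{1,3,4},{2,3,4}} by decide]
  simp +decide [Finset.sum_insert, Finset.prod_insert]
  ring

/-- `∂ᵢe₃(v) = e₂(v₁, …, v̂ᵢ, …, v₅)`, and `2e₂ = p₁² - p₂`. -/
lemma two_mul_eval_pderiv_e3Poly (v : V5) (i : Fin 5) :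
    2 * eval v (pderiv i e3Poly) = (∑ j, v j - v i) ^ 2 - (∑ j, v j ^ 2 - v i ^ 2) := by
  rw [e3Poly_eq]
  fin_cases i <;> simp [Fin.sum_univ_five, pderiv_X] <;> ring

theorem forall_eval_pderiv_e3Poly_eq_zero_iff {v : V5} (hv : v ≠ 0) :
    (∀ i, eval v (pderiv i e3Poly) = 0) ↔ ∃ (c : ℂ) (i : Fin 5), v = c • Pi.single i 1 := by
  have h (i : Fin 5) : eval v (pderiv i e3Poly) = 0 ↔
      (∑ j, v j - v i) ^ 2 = ∑ j, v j ^ 2 - v i ^ 2 := by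
    rw [← mul_right_inj' two_ne_zero, two_mul_eval_pderiv_e3Poly, mul_zero, sub_eq_zero]
  simp_rw [h]
  exact forall_sum_sub_sq_eq_iff (by simp) hv

def coordPoint (i : Fin 5) : P4 := Projectivization.mk ℂ (Pi.single i 1) (single_one_ne_zero i)

lemma coordPoint_injective : Function.Injective coordPoint := by
  intro i j h
  obtain ⟨a, ha⟩ := (Projectivization.mk_eq_mk_iff' _ _ _ _ _).1 h
  by_contra hij
  simpa [hij] using congrFun ha i

lemma projMap_permLin_coordPoint (σ : Equiv.Perm (Fin 5)) (i : Fin 5) :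
    projMap (permLin σ) (coordPoint i) = coordPoint (σ⁻¹ i) := by
  simp only [projMap, coordPoint, Projectivization.map_mk]
  congr 1
  exact Pi.single_comp_equiv σ i 1

lemma SingY1_eq_range_coordPoint : SingY1 = Set.range coordPoint := by
  ext p
  constructor
  · rintro ⟨v, hv, rfl, hcrit⟩
    obtain ⟨c, i, rfl⟩ := (forall_eval_pderiv_e3Poly_eq_zero_iff hv).1 hcrit
    exact ⟨i, ((Projectivization.mk_eq_mk_iff' _ _ _ _ _).2 ⟨c, rfl⟩).symm⟩
  · rintro ⟨i, rfl⟩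
    exact ⟨_, _, rfl, (forall_eval_pderiv_e3Poly_eq_zero_iff (single_one_ne_zero i)).2
      ⟨1, i, (one_smul _ _).symm⟩⟩

lemma A5orbit_coordPoint_zero : A5orbit (coordPoint 0) = Set.range coordPoint := by
  ext p
  constructor
  · rintro ⟨σ, -, rfl⟩
    exact ⟨σ⁻¹ 0, (projMap_permLin_coordPoint σ 0).symm⟩
  · rintro ⟨i, rfl⟩
    have := alternatingGroup.isPretransitive_of_three_le_card (Fin 5) (by simp)
    obtain ⟨σ, hσ⟩ := MulAction.exists_smul_eq (alternatingGroup (Fin 5)) i 0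
    refine ⟨σ, σ.2, ?_⟩
    rw [projMap_permLin_coordPoint, ← hσ, Subgroup.smul_def, Equiv.Perm.smul_def]
    simp

/-- The singular locus of Y₁ is the set of the five coordinate points of ℙ⁴,
which form a single 𝔄₅-orbit. -/
theorem statement7 :
    (∀ v : V5, v ≠ 0 →
      ((∀ i : Fin 5, eval v (pderiv i e3Poly) = 0) ↔
        ∃ (c : ℂ) (i : Fin 5), v = c • (Pi.single i 1 : V5))) ∧
    SingY1 = { p : P4 | ∃ i : Fin 5, p = Projectivization.mk ℂ (Pi.single i 1) (single_one_ne_zero i) } ∧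
    SingY1 = A5orbit (Projectivization.mk ℂ (Pi.single 0 1) (single_one_ne_zero 0)) ∧
    SingY1.ncard = 5 := by
  have hrange : Set.range coordPoint = { p : P4 | ∃ i, p = coordPoint i } :=
    Set.ext fun p => exists_congr fun i => eq_comm
  refine ⟨fun v hv => forall_eval_pderiv_e3Poly_eq_zero_iff hv, ?_, ?_, ?_⟩
  · exact SingY1_eq_range_coordPoint.trans hrange
  · exact SingY1_eq_range_coordPoint.trans A5orbit_coordPoint_zero.symm
  · rw [SingY1_eq_range_coordPoint, Set.ncard_range_of_injective coordPoint_injective]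
    simp
end
end

section
/- The subgroup Γ of GL(ℂ⁵) generated by the two linear maps g₁ and g₂ is isomorphic to the alternating group 𝔄₅; in particular Γ has order 60. -/
open Projectivization MvPolynomial

noncomputable section
set_option linter.unnecessarySeqFocus false

/-- g₁(x₁,…,x₅) = (x₄, x₁, x₅, x₂, −x₁−x₂−x₃−x₄−x₅). -/
def g1 : V5 ≃ₗ[ℂ] V5 where
  toFun x := ![x 3, x 0, x 4, x 1, -(x 0 + x 1 + x 2 + x 3 + x 4)]
  map_add' a b := by funext i; fin_cases i <;> simp <;> ring
  map_smul' c a := by funext i; fin_cases i <;> simp <;> ring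
  invFun y := ![y 1, y 3, -(y 0 + y 1 + y 2 + y 3 + y 4), y 0, y 2]
  left_inv x := by funext i; fin_cases i <;> simp <;> ring
  right_inv y := by funext i; fin_cases i <;> simp <;> ring

/-- g₂(x₁,…,x₅) = (x₄, −x₁−x₂−x₃−x₄−x₅, x₁, x₃, x₂). -/
def g2 : V5 ≃ₗ[ℂ] V5 where
  toFun x := ![x 3, -(x 0 + x 1 + x 2 + x 3 + x 4), x 0, x 2, x 1]
  map_add' a b := by funext i; fin_cases i <;> simp <;> ring
  map_smul' c a := by funext i; fin_cases i <;> simp <;> ring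
  invFun y := ![y 2, y 4, y 3, y 0, -(y 0 + y 1 + y 2 + y 3 + y 4)]
  left_inv x := by funext i; fin_cases i <;> simp <;> ring
  right_inv y := by funext i; fin_cases i <;> simp <;> ring

/-- Γ ⊂ GL(ℂ⁵) is the subgroup generated by g₁ and g₂. -/
def Gamma : Subgroup (V5 ≃ₗ[ℂ] V5) := Subgroup.closure {g1, g2}

/-- The Γ-orbit of a point of ℙ⁴. -/
def GammaOrbit (p : P4) : Set P4 :=
  { q | ∃ γ ∈ Gamma, q = projMap γ p }

/-- The quadratic form q = Σ_{1≤i≤j≤5} xᵢxⱼ. -/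
def qQ (v : V5) : ℂ := ∑ i, ∑ j, if i ≤ j then v i * v j else 0

/-- The quadric threefold X₂ = {q = 0} ⊂ ℙ⁴. -/
def X2 : Set P4 :=
  { p | ∃ (v : V5) (hv : v ≠ 0), p = Projectivization.mk ℂ v hv ∧ qQ v = 0 }
/-!
Put x₆ = −(x₁ + ⋯ + x₅). Then ℂ⁵ is the sum-zero hyperplane of ℂ⁶, on which S₆ acts faithfully
by permuting coordinates, and g₁, g₂ are the coordinate permutations (1 2 4)(3 6 5) and
(1 3 4)(2 5 6). Both preserve a synthematic total, i.e. five synthemes (partitions of the six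
points into three pairs) that share no pair, and the stabilizer of a total acts faithfully on its
five synthemes: this is the exotic embedding S₅ ↪ S₆. On the total g₁ and g₂ act as two
3-cycles. The group these generate lies in A₅ and has elements of order 2, 3 and 5, so it has
index at most 2, and by simplicity of A₅ it is all of A₅.
-/

open Equiv Subgroup MulAction
open scoped Pointwise

section StandardRepresentation

variable {R : Type*} [CommRing R] {n : ℕ}

def sumZeroExtend : (Fin n → R) →ₗ[R] (Fin (n + 1) → R) where
  toFun x := Fin.snoc x (-∑ i, x i)
  map_add' x y := by
    ext j; induction j using Fin.lastCases <;> simp [Finset.sum_add_distrib, add_comm]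
  map_smul' c x := by
    ext j; induction j using Fin.lastCases <;> simp [Finset.mul_sum]

@[simp] lemma sumZeroExtend_castSucc (x : Fin n → R) (i : Fin n) :
    sumZeroExtend x i.castSucc = x i := by
  simp [sumZeroExtend]

@[simp] lemma sumZeroExtend_last (x : Fin n → R) :
    sumZeroExtend x (Fin.last n) = -∑ i, x i := by
  simp [sumZeroExtend]

lemma sum_sumZeroExtend (x : Fin n → R) : ∑ j, sumZeroExtend x j = 0 := by
  simp [Fin.sum_univ_castSucc]

lemma sumZeroExtend_injective : Function.Injective (sumZeroExtend : (Fin n → R) → _) :=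
  fun x y h => funext fun i => by simpa using congrFun h i.castSucc

def permAct (π : Perm (Fin (n + 1))) : (Fin n → R) →ₗ[R] (Fin n → R) :=
  LinearMap.funLeft R R (π ∘ Fin.castSucc) ∘ₗ sumZeroExtend

lemma permAct_apply (π : Perm (Fin (n + 1))) (x : Fin n → R) (i : Fin n) :
    permAct π x i = sumZeroExtend x (π i.castSucc) :=
  rfl

lemma sumZeroExtend_permAct (π : Perm (Fin (n + 1))) (x : Fin n → R) :
    sumZeroExtend (permAct π x) = sumZeroExtend x ∘ π := by
  ext j
  induction j using Fin.lastCases with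
  | cast i => simp [permAct_apply]
  | last =>
    have h := sum_sumZeroExtend x
    rw [← Equiv.sum_comp π, Fin.sum_univ_castSucc] at h
    simp only [sumZeroExtend_last, permAct_apply, Function.comp_apply]
    linear_combination -h

lemma permAct_one : permAct (1 : Perm (Fin (n + 1))) = (1 : Module.End R (Fin n → R)) :=
  LinearMap.ext fun x => sumZeroExtend_injective <| by
    simp [sumZeroExtend_permAct]

lemma permAct_mul (π σ : Perm (Fin (n + 1))) :
    permAct (π * σ) = (permAct σ * permAct π : Module.End R (Fin n → R)) :=
  LinearMap.ext fun x => sumZeroExtend_injective <| by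
    simp [sumZeroExtend_permAct, Function.comp_assoc]

variable (R n) in
def standardRep : Perm (Fin (n + 1)) →* ((Fin n → R) ≃ₗ[R] (Fin n → R)) :=
  (LinearMap.GeneralLinearGroup.generalLinearEquiv R _).toMonoidHom.comp
    (MonoidHom.toHomUnits
      { toFun := fun π => permAct π⁻¹
        map_one' := by simp [permAct_one]
        map_mul' := fun π σ => by simp [permAct_mul, mul_inv_rev] })

lemma standardRep_apply (π : Perm (Fin (n + 1))) (x : Fin n → R) (i : Fin n) :
    standardRep R n π x i = sumZeroExtend x (π⁻¹ i.castSucc) :=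
  rfl

lemma sumZeroExtend_standardRep (π : Perm (Fin (n + 1))) (x : Fin n → R) :
    sumZeroExtend (standardRep R n π x) = sumZeroExtend x ∘ ⇑π⁻¹ :=
  sumZeroExtend_permAct _ x

lemma Equiv.Perm.eq_one_of_forall_apply_castSucc (σ : Perm (Fin (n + 1)))
    (h : ∀ i : Fin n, σ i.castSucc = i.castSucc) : σ = 1 := by
  have : σ.support ⊆ {Fin.last n} := by
    intro j hj
    induction j using Fin.lastCases with
    | last => simp
    | cast i => simp [h i] at hj
  have := Finset.card_le_card this
  rw [Finset.card_singleton] at this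
  have := σ.card_support_ne_one
  exact Perm.card_support_eq_zero.mp (by omega)

lemma eq_castSucc_of_sumZeroExtend_single_eq_one (h2 : (2 : R) ≠ 0) {i : Fin n}
    {j : Fin (n + 1)} (h : sumZeroExtend (Pi.single i (1 : R)) j = 1) : j = i.castSucc := by
  induction j using Fin.lastCases with
  | last =>
    simp only [sumZeroExtend_last, Finset.sum_pi_single', Finset.mem_univ, if_true] at h
    exact absurd (by linear_combination -h) h2
  | cast k =>
    obtain rfl | hk := eq_or_ne k i
    · rfl
    · simp only [sumZeroExtend_castSucc, Pi.single_apply, hk, if_false] at h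
      exact absurd (by linear_combination -2 * h) h2

lemma standardRep_injective (h2 : (2 : R) ≠ 0) : Function.Injective (standardRep R n) := by
  rw [injective_iff_map_eq_one]
  intro π hπ
  suffices π⁻¹ = 1 from inv_eq_one.mp this
  apply Perm.eq_one_of_forall_apply_castSucc
  intro i
  apply eq_castSucc_of_sumZeroExtend_single_eq_one h2
  simpa [hπ] using (congrFun (sumZeroExtend_standardRep π (Pi.single i (1 : R))) i.castSucc).symm

end StandardRepresentation

section RangeStabilizer

variable {G α ι : Type*} [Group G] [MulAction G α] {t : ι → α}

def rangeStabilizerToPerm (ht : Function.Injective t) : stabilizer G (Set.range t) →* Perm ι :=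
  (Equiv.ofInjective t ht).symm.permCongrHom.toMonoidHom.comp (toPermHom _ _)

lemma apply_rangeStabilizerToPerm (ht : Function.Injective t) (g : stabilizer G (Set.range t))
    (i : ι) : t (rangeStabilizerToPerm ht g i) = (g : G) • t i :=
  Equiv.apply_ofInjective_symm ht _

lemma mem_stabilizer_range_of_smul_eq {g : G} {σ : Perm ι} (h : ∀ i, g • t i = t (σ i)) :
    g ∈ stabilizer G (Set.range t) := by
  rw [mem_stabilizer_iff, Set.smul_set_range, funext h]
  exact σ.surjective.range_comp t

lemma rangeStabilizerToPerm_mk (ht : Function.Injective t) {g : G} {σ : Perm ι}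
    (h : ∀ i, g • t i = t (σ i)) :
    rangeStabilizerToPerm ht ⟨g, mem_stabilizer_range_of_smul_eq h⟩ = σ :=
  Equiv.ext fun i => ht <| (apply_rangeStabilizerToPerm ht _ i).trans (h i)

lemma rangeStabilizerToPerm_injective (ht : Function.Injective t)
    (hfaithful : ∀ g : G, (∀ i, g • t i = t i) → g = 1) :
    Function.Injective (rangeStabilizerToPerm (G := G) ht) := by
  rw [injective_iff_map_eq_one]
  intro g hg
  refine Subtype.ext (hfaithful g fun i => ?_)
  rw [← apply_rangeStabilizerToPerm ht, hg, Perm.one_apply]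

end RangeStabilizer

def MonoidHom.closurePairEquiv {G H : Type*} [Group G] [Group H] (f : G →* H)
    (hf : Function.Injective f) {a b : G} {a' b' : H} (ha : f a = a') (hb : f b = b') :
    closure {a, b} ≃* closure {a', b'} :=
  (equivMapOfInjective _ f hf).trans
    (MulEquiv.subgroupCongr (by rw [f.map_closure, Set.image_pair, ha, hb]))

lemma Subgroup.eq_top_of_card_dvd_two_mul {G : Type*} [Group G] [IsSimpleGroup G] [Finite G]
    (hG : Nat.card G ≠ 2) {H : Subgroup G} (h : Nat.card G ∣ 2 * Nat.card H) : H = ⊤ := by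
  have hidx : H.index ∣ 2 := by
    rw [← H.card_mul_index, mul_comm] at h
    exact Nat.dvd_of_mul_dvd_mul_right Nat.card_pos h
  rcases (Nat.dvd_prime Nat.prime_two).1 hidx with h1 | h2
  · exact index_eq_one.mp h1
  · rcases (normal_of_index_eq_two h2).eq_bot_or_eq_top with rfl | rfl
    · rw [index_bot] at h2
      exact absurd h2 hG
    · rfl

lemma Subgroup.prime_dvd_natCard_of_mem {G : Type*} [Group G] {K : Subgroup G} {p : ℕ}
    (hp : p.Prime) {x : G} (hx : x ∈ K) (hxp : x ^ p = 1) (hx1 : x ≠ 1) : p ∣ Nat.card K :=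
  have : Fact p.Prime := ⟨hp⟩
  orderOf_eq_prime hxp hx1 ▸ K.orderOf_dvd_natCard hx

/-- A syntheme is encoded as the product of its three transpositions. These five, one through
each pair {0, k}, form a synthematic total. -/
def syntheme : Fin 5 → Perm (Fin 6) :=
  ![swap 0 1 * swap 2 4 * swap 3 5, swap 0 2 * swap 1 5 * swap 3 4, swap 0 3 * swap 1 2 * swap 4 5,
    swap 0 4 * swap 1 3 * swap 2 5, swap 0 5 * swap 1 4 * swap 2 3]

lemma syntheme_injective : Function.Injective syntheme := by decide

lemma eq_one_of_forall_commute_syntheme :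
    ∀ π : Perm (Fin 6), (∀ i, π * syntheme i * π⁻¹ = syntheme i) → π = 1 := by
  decide +kernel

abbrev totalStabilizer : Subgroup (ConjAct (Perm (Fin 6))) :=
  stabilizer (ConjAct (Perm (Fin 6))) (Set.range syntheme)

def totalToPerm : totalStabilizer →* Perm (Fin 5) :=
  rangeStabilizerToPerm syntheme_injective

lemma totalToPerm_injective : Function.Injective totalToPerm :=
  rangeStabilizerToPerm_injective syntheme_injective fun g hg => by
    simpa using eq_one_of_forall_commute_syntheme (ConjAct.ofConjAct g)
      (by simpa [ConjAct.smul_def] using hg)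

/-- Points are 0-indexed: `5` stands for the coordinate x₆ = −(x₁ + ⋯ + x₅). -/
def g1Perm : Perm (Fin 6) := c[0, 1, 3] * c[2, 5, 4]
def g2Perm : Perm (Fin 6) := c[0, 2, 3] * c[1, 4, 5]
def g1OnTotal : Perm (Fin 5) := c[0, 3, 2]
def g2OnTotal : Perm (Fin 5) := c[1, 4, 2]

lemma standardRep_g1Perm : standardRep ℂ 5 g1Perm = g1 := by
  have h : (fun i : Fin 5 => g1Perm⁻¹ i.castSucc) =
      ![(3 : Fin 5).castSucc, (0 : Fin 5).castSucc, (4 : Fin 5).castSucc, (1 : Fin 5).castSucc,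
        Fin.last 5] := by
    decide
  refine LinearEquiv.ext fun x => funext fun i => ?_
  rw [standardRep_apply, congrFun h i]
  fin_cases i
  iterate 4 exact sumZeroExtend_castSucc x _
  exact (sumZeroExtend_last x).trans (by rw [Fin.sum_univ_five]; rfl)

lemma standardRep_g2Perm : standardRep ℂ 5 g2Perm = g2 := by
  have h : (fun i : Fin 5 => g2Perm⁻¹ i.castSucc) =
      ![(3 : Fin 5).castSucc, Fin.last 5, (0 : Fin 5).castSucc, (2 : Fin 5).castSucc,
        (1 : Fin 5).castSucc] := by
    decide
  refine LinearEquiv.ext fun x => funext fun i => ?_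
  rw [standardRep_apply, congrFun h i]
  fin_cases i
  · exact sumZeroExtend_castSucc x _
  · exact (sumZeroExtend_last x).trans (by rw [Fin.sum_univ_five]; rfl)
  iterate 3 exact sumZeroExtend_castSucc x _

lemma g1Perm_smul_syntheme (i : Fin 5) :
    ConjAct.toConjAct g1Perm • syntheme i = syntheme (g1OnTotal i) := by
  rw [ConjAct.toConjAct_smul]; revert i; decide

lemma g2Perm_smul_syntheme (i : Fin 5) :
    ConjAct.toConjAct g2Perm • syntheme i = syntheme (g2OnTotal i) := by
  rw [ConjAct.toConjAct_smul]; revert i; decide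

lemma card_alternatingGroup_fin_five : Nat.card (alternatingGroup (Fin 5)) = 60 := by
  rw [nat_card_alternatingGroup, Nat.card_fin]
  rfl

set_option maxRecDepth 10000 in
lemma closure_g1OnTotal_g2OnTotal :
    closure {g1OnTotal, g2OnTotal} = alternatingGroup (Fin 5) := by
  set K := closure {g1OnTotal, g2OnTotal}
  have ha : g1OnTotal ∈ K := subset_closure (by simp)
  have hb : g2OnTotal ∈ K := subset_closure (by simp)
  have hKA : K ≤ alternatingGroup (Fin 5) := (closure_le _).2 <| by
    rintro _ (rfl | rfl) <;> rw [SetLike.mem_coe, Perm.mem_alternatingGroup] <;> decide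
  have h2 : 2 ∣ Nat.card K := prime_dvd_natCard_of_mem Nat.prime_two
    (mul_mem (mul_mem (mul_mem (mul_mem ha hb) ha) hb) ha) (by decide) (by decide)
  have h3 : 3 ∣ Nat.card K := prime_dvd_natCard_of_mem Nat.prime_three ha (by decide) (by decide)
  have h5 : 5 ∣ Nat.card K :=
    prime_dvd_natCard_of_mem Nat.prime_five (mul_mem ha hb) (by decide) (by decide)
  have h30 : 30 ∣ Nat.card K := Nat.Coprime.mul_dvd_of_dvd_of_dvd (by norm_num)
    (Nat.Coprime.mul_dvd_of_dvd_of_dvd (by norm_num) h2 h3) h5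
  refine le_antisymm hKA ?_
  rw [← subgroupOf_eq_top]
  refine eq_top_of_card_dvd_two_mul (by rw [card_alternatingGroup_fin_five]; decide) ?_
  rw [card_alternatingGroup_fin_five, Nat.card_congr (subgroupOfEquivOfLe hKA).toEquiv]
  exact Nat.mul_dvd_mul_left 2 h30

/-- Γ = ⟨g₁, g₂⟩ is isomorphic to the alternating group 𝔄₅; in particular |Γ| = 60. -/
theorem statement9 :
    Nonempty (Gamma ≃* alternatingGroup (Fin 5)) ∧ Nat.card Gamma = 60 := by
  let n₁ : totalStabilizer := ⟨_, mem_stabilizer_range_of_smul_eq g1Perm_smul_syntheme⟩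
  let n₂ : totalStabilizer := ⟨_, mem_stabilizer_range_of_smul_eq g2Perm_smul_syntheme⟩
  let toGL := (standardRep ℂ 5).comp (ConjAct.ofConjAct.toMonoidHom.comp totalStabilizer.subtype)
  have htoGL : Function.Injective toGL := (standardRep_injective two_ne_zero).comp
    (ConjAct.ofConjAct.injective.comp Subtype.val_injective)
  let toGamma : closure {n₁, n₂} ≃* Gamma :=
    toGL.closurePairEquiv htoGL standardRep_g1Perm standardRep_g2Perm
  let toAlternating : closure {n₁, n₂} ≃* alternatingGroup (Fin 5) :=
    (totalToPerm.closurePairEquiv totalToPerm_injective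
      (rangeStabilizerToPerm_mk _ g1Perm_smul_syntheme)
      (rangeStabilizerToPerm_mk _ g2Perm_smul_syntheme)).trans
      (MulEquiv.subgroupCongr closure_g1OnTotal_g2OnTotal)
  let e := toGamma.symm.trans toAlternating
  exact ⟨⟨e⟩, (Nat.card_congr e.toEquiv).trans card_alternatingGroup_fin_five⟩
end
end

section
/- The quadratic form q = Σ_{1≤i≤j≤5} xᵢxⱼ satisfies q∘g₁ = q and q∘g₂ = q, and every homogeneous polynomial of degree 2 in ℂ[x₁,…,x₅] that is invariant under the substitutions g₁ and g₂ is a scalar multiple of q. In particular, X₂ is the unique quadric hypersurface of ℙ⁴ invariant under Γ. -/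
open Projectivization MvPolynomial

noncomputable section
set_option linter.unnecessarySeqFocus false

/-- q = Σ_{1≤i≤j≤5} xᵢxⱼ as a polynomial. -/
def qPoly : MvPolynomial (Fin 5) ℂ := ∑ i, ∑ j, if i ≤ j then X i * X j else 0

/-- The substitution p ↦ p∘g₁ on polynomials. -/
def sub1 : MvPolynomial (Fin 5) ℂ →ₐ[ℂ] MvPolynomial (Fin 5) ℂ :=
  bind₁ ![X 3, X 0, X 4, X 1, -(X 0 + X 1 + X 2 + X 3 + X 4)]

/-- The substitution p ↦ p∘g₂ on polynomials. -/
def sub2 : MvPolynomial (Fin 5) ℂ →ₐ[ℂ] MvPolynomial (Fin 5) ℂ :=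
  bind₁ ![X 3, -(X 0 + X 1 + X 2 + X 3 + X 4), X 0, X 2, X 1]

/-!
With y₆ := -(x₁ + ⋯ + x₅), ℂ⁵ becomes the hyperplane Σ yₐ = 0 of ℂ⁶, on which g₁ and g₂ act
by permuting the six coordinates (and 2q = Σ yₐ²). These two permutations generate a group of
order 60 acting 2-transitively on the six indices, so a Γ-invariant form p takes one and the
same value on all thirty vectors eₐ - e_b. In x-coordinates these are the ±eᵢ and eᵢ - eⱼ, and
by polarization a quadratic form is determined by its values there; hence p = p(e₁) • q.
-/

open scoped Pointwise

namespace MvPolynomial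

variable {σ R : Type*} [Fintype σ] [DecidableEq σ] [CommRing R]

theorem IsHomogeneous.two_mul_eval_eq_sum_eval_single {p : MvPolynomial σ R}
    (hp : p.IsHomogeneous 2) (v : σ → R) :
    2 * eval v p = ∑ i, ∑ j, v i * v j * (eval (Pi.single i 1) p + eval (Pi.single j 1) p
      - eval (Pi.single i 1 - Pi.single j 1) p) := by
  have hmem : p ∈ Submodule.span R
      (Set.range (X : σ → MvPolynomial σ R) * Set.range (X : σ → MvPolynomial σ R)) := by
    rw [← Submodule.span_mul_span, ← pow_two, ← homogeneousSubmodule_one_eq_span_X,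
      homogeneousSubmodule_one_pow]
    exact hp
  clear hp
  induction hmem using Submodule.span_induction with
  | mem x hx =>
    obtain ⟨_, ⟨k, rfl⟩, _, ⟨l, rfl⟩, rfl⟩ := hx
    calc 2 * eval v (X k * X l)
        = ∑ i, ∑ j, v i * v j * ((Pi.single i 1 : σ → R) k * (Pi.single j 1 : σ → R) l
            + (Pi.single j 1 : σ → R) k * (Pi.single i 1 : σ → R) l) := by
          simp only [map_mul, eval_X, Pi.single_apply, mul_ite, mul_one, mul_zero, mul_add,
            Finset.sum_add_distrib, Finset.sum_ite_eq, Finset.mem_univ, ↓reduceIte,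
            Finset.sum_ite_irrel, Finset.sum_const_zero]
          ring
      _ = _ := by
          refine Finset.sum_congr rfl fun i _ => Finset.sum_congr rfl fun j _ => ?_
          simp only [eval_mul, eval_X, Pi.sub_apply]
          ring
  | zero => simp
  | add x y _ _ hx hy =>
    rw [map_add, mul_add, hx, hy, ← Finset.sum_add_distrib]
    refine Finset.sum_congr rfl fun i _ => ?_
    rw [← Finset.sum_add_distrib]
    refine Finset.sum_congr rfl fun j _ => ?_
    simp only [map_add]
    ring
  | smul a x _ hx =>
    simp only [smul_eq_C_mul, eval_mul, eval_C]
    rw [mul_left_comm, hx, Finset.mul_sum]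
    refine Finset.sum_congr rfl fun i _ => ?_
    rw [Finset.mul_sum]
    refine Finset.sum_congr rfl fun j _ => ?_
    ring

theorem IsHomogeneous.eq_zero_of_eval_single_eq_zero [IsDomain R] [CharZero R]
    {p : MvPolynomial σ R} (hp : p.IsHomogeneous 2)
    (h₁ : ∀ i, eval (Pi.single i 1) p = 0)
    (h₂ : ∀ i j, i ≠ j → eval (Pi.single i 1 - Pi.single j 1) p = 0) : p = 0 := by
  have h₀ : eval 0 p = 0 := by
    rw [eval_zero]
    exact hp.coeff_eq_zero (by simp)
  have h₂' : ∀ i j, eval (Pi.single i 1 - Pi.single j 1) p = 0 := fun i j => by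
    rcases eq_or_ne i j with rfl | hij
    · rw [sub_self, h₀]
    · exact h₂ i j hij
  refine MvPolynomial.funext fun v => ?_
  have := hp.two_mul_eval_eq_sum_eval_single v
  simp only [h₁, h₂', add_zero, sub_zero, mul_zero, Finset.sum_const_zero] at this
  simpa using this

end MvPolynomial

section ReachWithin

variable {β : Type*} [DecidableEq β]

def reachWithin (fs : List (β → β)) (x : β) : ℕ → Finset β
  | 0 => {x}
  | n + 1 => reachWithin fs x n ∪
      (reachWithin fs x n).biUnion fun y => (fs.map (· y)).toFinset

theorem eq_of_mem_reachWithin {α : Type*} {fs : List (β → β)} {x : β} {F : β → α}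
    (hF : ∀ f ∈ fs, ∀ y, F (f y) = F y) : ∀ {n y}, y ∈ reachWithin fs x n → F y = F x
  | 0, y, hy => by rw [Finset.mem_singleton.1 hy]
  | n + 1, y, hy => by
    simp only [reachWithin, Finset.mem_union, Finset.mem_biUnion, List.mem_toFinset,
      List.mem_map] at hy
    rcases hy with hy | ⟨z, hz, f, hf, rfl⟩
    · exact eq_of_mem_reachWithin hF hy
    · rw [hF f hf, eq_of_mem_reachWithin hF hz]

end ReachWithin

/- Index `a : Fin 6` stands for the coordinate y_{a+1} of ℂ⁶, with y₆ = -(x₁ + ⋯ + x₅).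
`perm₁` and `perm₂` are the permutations of these six coordinates induced by g₁ and g₂, and
`vertex a` is the image of eₐ ∈ ℂ⁶ under the projection forgetting y₆, so that
`vertex a - vertex b` is the x-coordinate vector of eₐ - e_b ∈ {Σ y = 0}. -/
def perm₁ : Fin 6 → Fin 6 := ![1, 3, 5, 0, 2, 4]

def perm₂ : Fin 6 → Fin 6 := ![2, 4, 3, 0, 5, 1]

def vertex (a : Fin 6) : V5 := fun k => if k.castSucc = a then 1 else 0

set_option maxRecDepth 10000 in
theorem offDiag_subset_reachWithin :
    (Finset.univ : Finset (Fin 6)).offDiag ⊆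
      reachWithin [Prod.map perm₁ perm₁, Prod.map perm₂ perm₂] (0, 5) 6 := by
  decide

theorem eq_of_perm_invariant {α : Type*} {F : Fin 6 × Fin 6 → α}
    (h₁ : ∀ a b, F (perm₁ a, perm₁ b) = F (a, b)) (h₂ : ∀ a b, F (perm₂ a, perm₂ b) = F (a, b))
    {a b : Fin 6} (hab : a ≠ b) : F (a, b) = F (0, 5) :=
  eq_of_mem_reachWithin (by simpa using ⟨h₁, h₂⟩)
    (offDiag_subset_reachWithin
      (Finset.mem_offDiag.2 ⟨Finset.mem_univ _, Finset.mem_univ _, hab⟩))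

theorem g1_vertex (a : Fin 6) : g1 (vertex a) = vertex (perm₁ a) - vertex (perm₁ 5) := by
  funext k
  fin_cases a <;> fin_cases k <;> simp [g1, vertex, perm₁]

theorem g2_vertex (a : Fin 6) : g2 (vertex a) = vertex (perm₂ a) - vertex (perm₂ 5) := by
  funext k
  fin_cases a <;> fin_cases k <;> simp [g2, vertex, perm₂]

theorem g1_vertex_sub (a b : Fin 6) :
    g1 (vertex a - vertex b) = vertex (perm₁ a) - vertex (perm₁ b) := by
  rw [map_sub, g1_vertex, g1_vertex, sub_sub_sub_cancel_right]

theorem g2_vertex_sub (a b : Fin 6) :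
    g2 (vertex a - vertex b) = vertex (perm₂ a) - vertex (perm₂ b) := by
  rw [map_sub, g2_vertex, g2_vertex, sub_sub_sub_cancel_right]

theorem vertex_castSucc (i : Fin 5) : vertex i.castSucc = Pi.single i 1 := by
  funext k
  simp [vertex, Pi.single_apply]

theorem vertex_last : vertex (Fin.last 5) = 0 :=
  funext fun k => if_neg (Fin.castSucc_ne_last k)

theorem eval_sub1 (v : V5) (p : MvPolynomial (Fin 5) ℂ) : eval v (sub1 p) = eval (g1 v) p := by
  refine (eval₂Hom_bind₁ _ _ _ _).trans (congrArg (eval · p) (funext fun i => ?_))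
  fin_cases i <;> simp [g1]

theorem eval_sub2 (v : V5) (p : MvPolynomial (Fin 5) ℂ) : eval v (sub2 p) = eval (g2 v) p := by
  refine (eval₂Hom_bind₁ _ _ _ _).trans (congrArg (eval · p) (funext fun i => ?_))
  fin_cases i <;> simp [g2]

theorem eval_vertex_sub_eq_of_invariant {p : MvPolynomial (Fin 5) ℂ} (h₁ : sub1 p = p)
    (h₂ : sub2 p = p) {a b : Fin 6} (hab : a ≠ b) :
    eval (vertex a - vertex b) p = eval (vertex 0 - vertex 5) p :=
  eq_of_perm_invariant (F := fun x => eval (vertex x.1 - vertex x.2) p)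
    (fun a b => by dsimp only; rw [← g1_vertex_sub, ← eval_sub1, h₁])
    (fun a b => by dsimp only; rw [← g2_vertex_sub, ← eval_sub2, h₂]) hab

theorem qQ_g1 (v : V5) : qQ (g1 v) = qQ v := by
  simp only [qQ, g1, LinearEquiv.coe_mk, LinearMap.coe_mk, AddHom.coe_mk, Fin.sum_univ_five,
    Matrix.cons_val_zero, Matrix.cons_val_one, Matrix.cons_val, Fin.isValue, Fin.reduceLE,
    ↓reduceIte, le_refl, zero_add, add_zero]
  ring

theorem qQ_g2 (v : V5) : qQ (g2 v) = qQ v := by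
  simp only [qQ, g2, LinearEquiv.coe_mk, LinearMap.coe_mk, AddHom.coe_mk, Fin.sum_univ_five,
    Matrix.cons_val_zero, Matrix.cons_val_one, Matrix.cons_val, Fin.isValue, Fin.reduceLE,
    ↓reduceIte, le_refl, zero_add, add_zero]
  ring

theorem eval_qPoly (v : V5) : eval v qPoly = qQ v := by
  simp [qPoly, qQ, apply_ite (eval v)]

theorem sub1_qPoly : sub1 qPoly = qPoly :=
  MvPolynomial.funext fun v => by rw [eval_sub1, eval_qPoly, eval_qPoly, qQ_g1]

theorem sub2_qPoly : sub2 qPoly = qPoly :=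
  MvPolynomial.funext fun v => by rw [eval_sub2, eval_qPoly, eval_qPoly, qQ_g2]

theorem qQ_vertex_zero_sub_vertex_five : qQ (vertex 0 - vertex 5) = 1 := by
  simp [qQ, vertex, Fin.sum_univ_five]

theorem isHomogeneous_qPoly : qPoly.IsHomogeneous 2 := by
  refine IsHomogeneous.sum _ _ _ fun i _ => IsHomogeneous.sum _ _ _ fun j _ => ?_
  split_ifs
  · exact (isHomogeneous_X ℂ i).mul (isHomogeneous_X ℂ j)
  · exact isHomogeneous_zero _ _ _

theorem eq_C_mul_qPoly_of_invariant {p : MvPolynomial (Fin 5) ℂ} (hp : p.IsHomogeneous 2)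
    (h₁ : sub1 p = p) (h₂ : sub2 p = p) :
    p = C (eval (vertex 0 - vertex 5) p) * qPoly := by
  set c := eval (vertex 0 - vertex 5) p
  set r := p - C c * qPoly
  have hr₁ : sub1 r = r := by simp [r, h₁, sub1_qPoly]
  have hr₂ : sub2 r = r := by simp [r, h₂, sub2_qPoly]
  have hr₀ : ∀ a b, a ≠ b → eval (vertex a - vertex b) r = 0 := fun a b hab => by
    rw [eval_vertex_sub_eq_of_invariant hr₁ hr₂ hab]
    simp [r, c, eval_qPoly, qQ_vertex_zero_sub_vertex_five]
  have hr : r = 0 := (hp.sub (isHomogeneous_qPoly.C_mul c)).eq_zero_of_eval_single_eq_zero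
    (fun i => by
      simpa only [vertex_castSucc, vertex_last, sub_zero] using hr₀ _ _ (Fin.castSucc_ne_last i))
    (fun i j hij => by
      simpa only [vertex_castSucc] using hr₀ _ _ (Fin.castSucc_injective _ |>.ne hij))
  exact sub_eq_zero.1 hr

theorem zeroLocus_C_mul_qPoly {c : ℂ} (hc : c ≠ 0) :
    { x : P4 | ∃ (v : V5) (hv : v ≠ 0), x = Projectivization.mk ℂ v hv ∧ eval v (C c * qPoly) = 0 }
      = X2 := by
  simp only [eval_mul, eval_C, eval_qPoly, mul_eq_zero, hc, false_or]
  rfl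

/-- q is Γ-invariant, every Γ-invariant quadratic form is a scalar multiple of q,
and (in particular) X₂ is the unique Γ-invariant quadric hypersurface of ℙ⁴. -/
theorem statement10 :
    sub1 qPoly = qPoly ∧ sub2 qPoly = qPoly ∧
    (∀ p : MvPolynomial (Fin 5) ℂ, p.IsHomogeneous 2 → sub1 p = p → sub2 p = p →
      ∃ c : ℂ, p = C c * qPoly) ∧
    (∀ p : MvPolynomial (Fin 5) ℂ, p.IsHomogeneous 2 → p ≠ 0 → sub1 p = p → sub2 p = p →
      { x : P4 | ∃ (v : V5) (hv : v ≠ 0), x = Projectivization.mk ℂ v hv ∧ eval v p = 0 }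
        = X2) := by
  refine ⟨sub1_qPoly, sub2_qPoly, fun p hp h₁ h₂ => ⟨_, eq_C_mul_qPoly_of_invariant hp h₁ h₂⟩,
    fun p hp hne h₁ h₂ => ?_⟩
  have hpq := eq_C_mul_qPoly_of_invariant hp h₁ h₂
  rw [hpq]
  refine zeroLocus_C_mul_qPoly fun hc => hne ?_
  rw [hpq, hc, map_zero, zero_mul]
end
end

section
/- The cubic forms f₁ and f₂ satisfy f₁∘g₁ = f₁, f₁∘g₂ = f₁, f₂∘g₁ = f₂ and f₂∘g₂ = f₂, and every homogeneous polynomial of degree 3 in ℂ[x₁,…,x₅] that is invariant under the substitutions g₁ and g₂ is a ℂ-linear combination of f₁ and f₂; that is, the space of Γ-invariant cubic forms on ℂ⁵ is exactly the 2-dimensional space spanned by f₁ and f₂. -/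
open Projectivization MvPolynomial

noncomputable section
set_option linter.unnecessarySeqFocus false

/-- The cubic form f₁ as a polynomial. -/
def f1P : MvPolynomial (Fin 5) ℂ :=
  X 0 ^ 2 * X 1 + X 0 * X 1 ^ 2 + 2 * (X 0 * X 1 * X 2) + X 1 ^ 2 * X 2 + X 1 * X 2 ^ 2 +
    2 * (X 1 * X 2 * X 3) + X 2 ^ 2 * X 3 + X 2 * X 3 ^ 2 + X 0 ^ 2 * X 4 +
    2 * (X 0 * X 1 * X 4) + 2 * (X 0 * X 3 * X 4) + 2 * (X 2 * X 3 * X 4) + X 3 ^ 2 * X 4 +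
    X 0 * X 4 ^ 2 + X 3 * X 4 ^ 2

/-- The cubic form f₂ as a polynomial. -/
def f2P : MvPolynomial (Fin 5) ℂ :=
  X 0 ^ 2 * X 2 + X 0 * X 2 ^ 2 + X 0 ^ 2 * X 3 + 2 * (X 0 * X 1 * X 3) + X 1 ^ 2 * X 3 +
    2 * (X 0 * X 2 * X 3) + X 0 * X 3 ^ 2 + X 1 * X 3 ^ 2 + X 1 ^ 2 * X 4 +
    2 * (X 0 * X 2 * X 4) + 2 * (X 1 * X 2 * X 4) + X 2 ^ 2 * X 4 + 2 * (X 1 * X 3 * X 4) +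
    X 1 * X 4 ^ 2 + X 2 * X 4 ^ 2

/-!
Put x₆ := -(x₁ + ⋯ + x₅). Both g₁ and g₂ permute the six linear forms x₁, …, x₆, so Γ acts on
ℂ⁵ ≅ {y ∈ ℂ⁶ | ∑ yᵢ = 0} through a transitive permutation group G ≤ S₆ of order 60. Composing a
Γ-invariant cubic with the S₆-equivariant projection y ↦ y - (∑ yᵢ / 6)(1, …, 1) gives a
G-invariant cubic in six variables, whose coefficients are therefore constant on the G-orbits of
cubic monomials. There are four such orbits: the yᵢ³, the yᵢ²yⱼ, and two orbits of ten squarefree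
monomials, exchanged by taking complementary index sets. Restricted to the hyperplane the last two
orbit sums are -f₁ and -f₂, and the first two are ∓3(f₁ + f₂).
-/

namespace MvPolynomial

variable {R : Type*} [CommSemiring R]

theorem IsHomogeneous.eq_sum_antidiagonalTuple {k n : ℕ} {φ : MvPolynomial (Fin k) R}
    (hφ : φ.IsHomogeneous n) :
    φ = ∑ f ∈ Finset.Nat.antidiagonalTuple k n,
      monomial (Finsupp.equivFunOnFinite.symm f) (coeff (Finsupp.equivFunOnFinite.symm f) φ) := by
  have hsupp : φ.support ⊆
      (Finset.Nat.antidiagonalTuple k n).map Finsupp.equivFunOnFinite.symm.toEmbedding := by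
    intro d hd
    refine Finset.mem_map.mpr ⟨d, ?_, Finsupp.equivFunOnFinite.symm_apply_apply d⟩
    rw [Finset.Nat.mem_antidiagonalTuple, ← Finsupp.degree_eq_sum, Finsupp.degree_eq_weight_one]
    exact hφ (mem_support_iff.mp hd)
  calc φ = ∑ d ∈ φ.support, monomial d (coeff d φ) := φ.as_sum
    _ = _ := Finset.sum_subset hsupp fun d _ hd => by rw [notMem_support_iff.mp hd, monomial_zero]
    _ = _ := Finset.sum_map _ _ _

theorem coeff_equivFunOnFinite_symm_comp_of_rename_eq {σ : Type*} [Finite σ] {s : σ → σ}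
    (hs : Function.Injective s) {φ : MvPolynomial σ R} (h : rename s φ = φ) (f : σ → ℕ) :
    coeff (Finsupp.equivFunOnFinite.symm (f ∘ s)) φ =
      coeff (Finsupp.equivFunOnFinite.symm f) φ := by
  have hmap : (Finsupp.equivFunOnFinite.symm (f ∘ s)).mapDomain s =
      Finsupp.equivFunOnFinite.symm f := by
    ext j
    obtain ⟨i, rfl⟩ := (Finite.injective_iff_surjective.mp hs) j
    exact Finsupp.mapDomain_apply hs _ i
  conv_rhs => rw [← h, ← hmap, coeff_rename_mapDomain s hs]

theorem monomial_equivFunOnFinite_symm_one {σ : Type*} [Fintype σ] (f : σ → ℕ) :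
    monomial (Finsupp.equivFunOnFinite.symm f) (1 : R) = ∏ i, X i ^ f i := by
  rw [monomial_eq, C_1, one_mul, Finsupp.prod_fintype _ _ fun i => pow_zero _]
  rfl

end MvPolynomial

section OrbitExploration

variable {β : Type*} [DecidableEq β]

def orbitStep (g₁ g₂ : β → β) (S : Finset β) : Finset β :=
  S ∪ S.image g₁ ∪ S.image g₂

theorem eq_of_mem_orbitStep_iterate {γ : Type*} {c : β → γ} {g₁ g₂ : β → β}
    (h₁ : ∀ x, c (g₁ x) = c x) (h₂ : ∀ x, c (g₂ x) = c x) {r x : β} {n : ℕ}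
    (hx : x ∈ (orbitStep g₁ g₂)^[n] {r}) : c x = c r := by
  induction n generalizing x with
  | zero => rw [Function.iterate_zero_apply, Finset.mem_singleton] at hx; rw [hx]
  | succ n ih =>
    rw [Function.iterate_succ_apply', orbitStep] at hx
    simp only [Finset.mem_union, Finset.mem_image] at hx
    rcases hx with (hx | ⟨y, hy, rfl⟩) | ⟨y, hy, rfl⟩
    · exact ih hx
    · rw [h₁, ih hy]
    · rw [h₂, ih hy]

end OrbitExploration

/-- `sub1` and `sub2` substitute for the `i`-th of the six forms `X 0, …, X 4, -(X 0 + ⋯ + X 4)`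
the form with index `perm1 i`, resp. `perm2 i`. -/
def perm1 : Fin 6 → Fin 6 := ![3, 0, 4, 1, 5, 2]

def perm2 : Fin 6 → Fin 6 := ![3, 5, 0, 2, 1, 4]

def restrictToHyperplane : MvPolynomial (Fin 6) ℂ →ₐ[ℂ] MvPolynomial (Fin 5) ℂ :=
  aeval ![X 0, X 1, X 2, X 3, X 4, -(X 0 + X 1 + X 2 + X 3 + X 4)]

def centredLift : MvPolynomial (Fin 5) ℂ →ₐ[ℂ] MvPolynomial (Fin 6) ℂ :=
  aeval fun i => X (Fin.castSucc i) - (6⁻¹ : ℂ) • ∑ j, X j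

theorem restrictToHyperplane_centredLift (p : MvPolynomial (Fin 5) ℂ) :
    restrictToHyperplane (centredLift p) = p := by
  suffices h : restrictToHyperplane.comp centredLift = AlgHom.id ℂ _ from
    AlgHom.congr_fun h p
  refine algHom_ext fun i => ?_
  fin_cases i <;> simp [restrictToHyperplane, centredLift, Fin.sum_univ_six]

theorem centredLift_sub1 (p : MvPolynomial (Fin 5) ℂ) :
    centredLift (sub1 p) = rename perm1 (centredLift p) := by
  suffices h : centredLift.comp sub1 = (rename perm1).comp centredLift from
    AlgHom.congr_fun h p
  refine algHom_ext fun i => ?_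
  fin_cases i <;> simp [sub1, centredLift, perm1, Fin.sum_univ_six] <;> module

theorem centredLift_sub2 (p : MvPolynomial (Fin 5) ℂ) :
    centredLift (sub2 p) = rename perm2 (centredLift p) := by
  suffices h : centredLift.comp sub2 = (rename perm2).comp centredLift from
    AlgHom.congr_fun h p
  refine algHom_ext fun i => ?_
  fin_cases i <;> simp [sub2, centredLift, perm2, Fin.sum_univ_six] <;> module

theorem isHomogeneous_centredLift {p : MvPolynomial (Fin 5) ℂ} {n : ℕ}
    (hp : p.IsHomogeneous n) : (centredLift p).IsHomogeneous n := by
  have hmean : ((6⁻¹ : ℂ) • ∑ j, X j : MvPolynomial (Fin 6) ℂ).IsHomogeneous 1 := by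
    rw [smul_eq_C_mul]
    exact (IsHomogeneous.sum _ _ _ fun j _ => isHomogeneous_X ℂ j).C_mul _
  rw [← one_mul n]
  exact hp.aeval _ fun i => (isHomogeneous_X ℂ i.castSucc).sub hmean

def reachableExponents (r : Fin 6 → ℕ) : Finset (Fin 6 → ℕ) :=
  (orbitStep (· ∘ perm1) (· ∘ perm2))^[6] {r}

def cubeExponents : Finset (Fin 6 → ℕ) :=
  Finset.univ.image fun i => Pi.single i 3

def squareExponents : Finset (Fin 6 → ℕ) :=
  Finset.univ.offDiag.image fun ij => Pi.single ij.1 2 + Pi.single ij.2 1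

def tripleExponents (B : Finset (Finset (Fin 6))) : Finset (Fin 6 → ℕ) :=
  B.image fun s i => if i ∈ s then 1 else 0

/-- These ten triples form one orbit of `⟨perm1, perm2⟩` on 3-subsets; their complements form
the other. -/
def blocks : Finset (Finset (Fin 6)) :=
  {{0, 1, 3}, {0, 1, 5}, {0, 2, 3}, {0, 2, 4}, {0, 4, 5},
    {1, 2, 4}, {1, 2, 5}, {1, 3, 4}, {2, 3, 5}, {3, 4, 5}}

theorem antidiagonalTuple_six_three :
    Finset.Nat.antidiagonalTuple 6 3 = cubeExponents ∪ squareExponents ∪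
      tripleExponents blocks ∪ tripleExponents (blocks.image compl) := by
  decide +kernel

theorem disjoint_exponents :
    Disjoint cubeExponents squareExponents ∧
    Disjoint (cubeExponents ∪ squareExponents) (tripleExponents blocks) ∧
    Disjoint (cubeExponents ∪ squareExponents ∪ tripleExponents blocks)
      (tripleExponents (blocks.image compl)) := by
  decide +kernel

theorem cubeExponents_subset : cubeExponents ⊆ reachableExponents ![3, 0, 0, 0, 0, 0] := by
  decide +kernel

theorem squareExponents_subset : squareExponents ⊆ reachableExponents ![2, 1, 0, 0, 0, 0] := by
  decide +kernel

theorem tripleExponents_blocks_subset :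
    tripleExponents blocks ⊆ reachableExponents ![1, 1, 0, 1, 0, 0] := by
  decide +kernel

theorem tripleExponents_compl_blocks_subset :
    tripleExponents (blocks.image compl) ⊆ reachableExponents ![1, 1, 1, 0, 0, 0] := by
  decide +kernel

def orbitSum (S : Finset (Fin 6 → ℕ)) : MvPolynomial (Fin 6) ℂ :=
  ∑ f ∈ S, monomial (Finsupp.equivFunOnFinite.symm f) 1

theorem sum_monomial_coeff_eq_C_mul_orbitSum {P : MvPolynomial (Fin 6) ℂ}
    (h1 : rename perm1 P = P) (h2 : rename perm2 P = P) {S : Finset (Fin 6 → ℕ)}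
    {r : Fin 6 → ℕ} (hS : S ⊆ reachableExponents r) :
    ∑ f ∈ S, monomial (Finsupp.equivFunOnFinite.symm f)
        (coeff (Finsupp.equivFunOnFinite.symm f) P) =
      C (coeff (Finsupp.equivFunOnFinite.symm r) P) * orbitSum S := by
  rw [orbitSum, Finset.mul_sum]
  refine Finset.sum_congr rfl fun f hf => ?_
  have hcoeff : coeff (Finsupp.equivFunOnFinite.symm f) P =
      coeff (Finsupp.equivFunOnFinite.symm r) P :=
    eq_of_mem_orbitStep_iterate (c := fun f => coeff (Finsupp.equivFunOnFinite.symm f) P)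
      (coeff_equivFunOnFinite_symm_comp_of_rename_eq (by decide) h1)
      (coeff_equivFunOnFinite_symm_comp_of_rename_eq (by decide) h2) (hS hf)
  rw [C_mul_monomial, mul_one, hcoeff]

theorem exists_eq_orbitSums {P : MvPolynomial (Fin 6) ℂ} (hP : P.IsHomogeneous 3)
    (h1 : rename perm1 P = P) (h2 : rename perm2 P = P) :
    ∃ a b c d : ℂ, P = C a * orbitSum cubeExponents + C b * orbitSum squareExponents +
      C c * orbitSum (tripleExponents blocks) +
      C d * orbitSum (tripleExponents (blocks.image compl)) := by
  obtain ⟨h12, h123, h1234⟩ := disjoint_exponents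
  rw [hP.eq_sum_antidiagonalTuple, antidiagonalTuple_six_three, Finset.sum_union h1234,
    Finset.sum_union h123, Finset.sum_union h12,
    sum_monomial_coeff_eq_C_mul_orbitSum h1 h2 cubeExponents_subset,
    sum_monomial_coeff_eq_C_mul_orbitSum h1 h2 squareExponents_subset,
    sum_monomial_coeff_eq_C_mul_orbitSum h1 h2 tripleExponents_blocks_subset,
    sum_monomial_coeff_eq_C_mul_orbitSum h1 h2 tripleExponents_compl_blocks_subset]
  exact ⟨_, _, _, _, rfl⟩

theorem orbitSum_cubeExponents : orbitSum cubeExponents = ∑ i, X i ^ 3 := by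
  rw [orbitSum, cubeExponents, Finset.sum_image (by decide)]
  simp [X_pow_eq_monomial]

theorem orbitSum_squareExponents :
    orbitSum squareExponents = ∑ ij ∈ Finset.univ.offDiag, X ij.1 ^ 2 * X ij.2 := by
  rw [orbitSum, squareExponents, Finset.sum_image (by decide)]
  refine Finset.sum_congr rfl fun ij _ => ?_
  have h : Finsupp.equivFunOnFinite.symm (Pi.single ij.1 2 + Pi.single ij.2 1 : Fin 6 → ℕ) =
      Finsupp.single ij.1 2 + Finsupp.single ij.2 1 := by
    ext k
    simp [Pi.single_apply, Finsupp.single_apply, eq_comm]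
  rw [h, X_pow_eq_monomial, X, monomial_mul, one_mul]

theorem orbitSum_tripleExponents (B : Finset (Finset (Fin 6))) :
    orbitSum (tripleExponents B) = ∑ s ∈ B, ∏ i ∈ s, X i := by
  rw [orbitSum, tripleExponents, Finset.sum_image]
  · simp [monomial_equivFunOnFinite_symm_one, pow_ite, Finset.prod_ite_mem]
  · intro s _ t _ hst
    ext i
    have := congrFun hst i
    simp only at this
    split_ifs at this <;> simp_all

theorem sum_restrictToHyperplane_X : ∑ i, restrictToHyperplane (X i) = 0 := by
  simp [restrictToHyperplane, Fin.sum_univ_six]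

theorem restrictToHyperplane_orbitSum_cubeExponents :
    restrictToHyperplane (orbitSum cubeExponents) = -3 * (f1P + f2P) := by
  simp only [restrictToHyperplane, aeval_eq_bind₁, orbitSum_cubeExponents, Fin.sum_univ_six,
    map_add, map_pow, bind₁_X_right, Matrix.cons_val_zero, Matrix.cons_val_one, Matrix.cons_val,
    f1P, f2P]
  ring

theorem restrictToHyperplane_orbitSum_squareExponents :
    restrictToHyperplane (orbitSum squareExponents) = 3 * (f1P + f2P) := by
  have hsplit := Finset.sum_union (Finset.disjoint_diag_offDiag (s := Finset.univ))
    (f := fun ij : Fin 6 × Fin 6 =>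
      restrictToHyperplane (X ij.1) ^ 2 * restrictToHyperplane (X ij.2))
  rw [Finset.diag_union_offDiag, Finset.sum_diag, Finset.univ_product_univ,
    Fintype.sum_prod_type] at hsplit
  simp only [← pow_succ] at hsplit
  rw [← Finset.sum_mul_sum, sum_restrictToHyperplane_X, mul_zero] at hsplit
  have hcubes := restrictToHyperplane_orbitSum_cubeExponents
  rw [orbitSum_cubeExponents, map_sum] at hcubes
  rw [orbitSum_squareExponents, map_sum]
  simp only [map_mul, map_pow] at hcubes ⊢
  linear_combination -hsplit - hcubes

theorem restrictToHyperplane_orbitSum_blocks :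
    restrictToHyperplane (orbitSum (tripleExponents blocks)) = -f1P := by
  simp +decide only [restrictToHyperplane, aeval_eq_bind₁, blocks, orbitSum_tripleExponents,
    Finset.mem_insert, Finset.mem_singleton, Finset.sum_insert, Finset.prod_insert,
    Finset.prod_singleton, Finset.sum_singleton, map_add, map_mul, bind₁_X_right,
    Matrix.cons_val_zero, Matrix.cons_val_one, Matrix.cons_val, f1P]
  ring

theorem restrictToHyperplane_orbitSum_compl_blocks :
    restrictToHyperplane (orbitSum (tripleExponents (blocks.image compl))) = -f2P := by
  have hcompl (s : Finset (Fin 6)) : ∏ i ∈ sᶜ, restrictToHyperplane (X i) =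
      ∏ i, if i ∈ sᶜ then restrictToHyperplane (X i) else 1 := by
    rw [Finset.prod_ite_mem, Finset.univ_inter]
  rw [orbitSum_tripleExponents, Finset.sum_image fun s _ t _ h => compl_injective h, map_sum]
  simp only [map_prod, hcompl]
  simp +decide only [blocks, Finset.mem_compl, restrictToHyperplane, aeval_eq_bind₁,
    bind₁_X_right, Fin.prod_univ_six, Matrix.cons_val_zero, Matrix.cons_val_one, Matrix.cons_val,
    ite_not, mul_ite, ite_mul, mul_one, one_mul, Finset.mem_insert, Finset.mem_singleton,
    not_false_eq_true, Finset.sum_insert, ↓reduceIte, Finset.sum_singleton, f2P]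
  ring

theorem sub1_f1P : sub1 f1P = f1P := by
  simp only [sub1, f1P, map_add, map_mul, map_pow, map_ofNat, bind₁_X_right,
    Matrix.cons_val_zero, Matrix.cons_val_one, Matrix.cons_val]
  ring

theorem sub2_f1P : sub2 f1P = f1P := by
  simp only [sub2, f1P, map_add, map_mul, map_pow, map_ofNat, bind₁_X_right,
    Matrix.cons_val_zero, Matrix.cons_val_one, Matrix.cons_val]
  ring

theorem sub1_f2P : sub1 f2P = f2P := by
  simp only [sub1, f2P, map_add, map_mul, map_pow, map_ofNat, bind₁_X_right,
    Matrix.cons_val_zero, Matrix.cons_val_one, Matrix.cons_val]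
  ring

theorem sub2_f2P : sub2 f2P = f2P := by
  simp only [sub2, f2P, map_add, map_mul, map_pow, map_ofNat, bind₁_X_right,
    Matrix.cons_val_zero, Matrix.cons_val_one, Matrix.cons_val]
  ring

theorem linearIndependent_f1P_f2P : LinearIndependent ℂ ![f1P, f2P] := by
  rw [LinearIndependent.pair_iff]
  intro s t hst
  exact ⟨by simpa [f1P, f2P] using congrArg (eval ![1, 1, 0, 0, 0]) hst,
    by simpa [f1P, f2P] using congrArg (eval ![1, 0, 1, 0, 0]) hst⟩

/-- f₁ and f₂ are Γ-invariant, and the space of Γ-invariant cubic forms is exactly the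
2-dimensional space spanned by f₁ and f₂. -/
theorem statement11 :
    sub1 f1P = f1P ∧ sub2 f1P = f1P ∧ sub1 f2P = f2P ∧ sub2 f2P = f2P ∧
    (∀ p : MvPolynomial (Fin 5) ℂ, p.IsHomogeneous 3 → sub1 p = p → sub2 p = p →
      ∃ a b : ℂ, p = C a * f1P + C b * f2P) ∧
    LinearIndependent ℂ ![f1P, f2P] := by
  refine ⟨sub1_f1P, sub2_f1P, sub1_f2P, sub2_f2P, fun p hp h1 h2 => ?_,
    linearIndependent_f1P_f2P⟩
  obtain ⟨a, b, c, d, hP⟩ := exists_eq_orbitSums (isHomogeneous_centredLift hp)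
    (by rw [← centredLift_sub1, h1]) (by rw [← centredLift_sub2, h2])
  refine ⟨3 * (b - a) - c, 3 * (b - a) - d, ?_⟩
  rw [← restrictToHyperplane_centredLift p, hP]
  simp only [map_add, map_mul, algHom_C, algebraMap_eq,
    restrictToHyperplane_orbitSum_cubeExponents, restrictToHyperplane_orbitSum_squareExponents,
    restrictToHyperplane_orbitSum_blocks, restrictToHyperplane_orbitSum_compl_blocks,
    map_sub, map_ofNat]
  ring
end
end

section
/- There is no nonzero vector v ∈ ℂ⁵ and scalars c₁, c₂ ∈ ℂ such that g₁(v) = c₁v and g₂(v) = c₂v. In particular, the action of Γ on ℙ⁴ has no fixed points, and hence the Γ-action on X₂ has no fixed points. -/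
open Projectivization MvPolynomial

noncomputable section
set_option linter.unnecessarySeqFocus false

/- In the coordinates x₁, …, x₆ of ℂ⁶ with x₆ = −(x₁ + ⋯ + x₅), the maps g₁ and g₂ are the
coordinate permutations (1 2 4)(3 6 5) and (1 3 4)(2 5 6), which generate a transitive group.
For a common eigenvector, the eigenvalue equations link all six coordinates, so one vanishes only
if all do; otherwise comparing them forces both eigenvalues to be 1, so the coordinates are all
equal, and their sum 6x₁ = 0 gives v = 0. -/

theorem LinearEquiv.eigenvalue_ne_zero {R M : Type*} [Semiring R] [AddCommMonoid M] [Module R M]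
    (f : M ≃ₗ[R] M) {v : M} {c : R} (hv : v ≠ 0) (h : f v = c • v) : c ≠ 0 := by
  rintro rfl
  exact hv (f.map_eq_zero_iff.mp (by rw [h, zero_smul]))

theorem Projectivization.exists_map_rep_eq_smul {K V : Type*} [DivisionRing K] [AddCommGroup V]
    [Module K V] (f : V →ₗ[K] V) (hf : Function.Injective f) {p : Projectivization K V}
    (h : Projectivization.map f hf p = p) : ∃ c : K, f p.rep = c • p.rep := by
  rw [← p.mk_rep, Projectivization.map_mk] at h
  obtain ⟨c, hc⟩ := (Projectivization.mk_eq_mk_iff' K _ _ _ _).mp h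
  exact ⟨c, hc.symm⟩

theorem g1_eq_smul_iff {v : V5} {c : ℂ} :
    g1 v = c • v ↔ v 3 = c * v 0 ∧ v 0 = c * v 1 ∧ v 4 = c * v 2 ∧ v 1 = c * v 3 ∧
      -(v 0 + v 1 + v 2 + v 3 + v 4) = c * v 4 := by
  simp [funext_iff, Fin.forall_fin_succ, g1]

theorem g2_eq_smul_iff {v : V5} {c : ℂ} :
    g2 v = c • v ↔ v 3 = c * v 0 ∧ -(v 0 + v 1 + v 2 + v 3 + v 4) = c * v 1 ∧ v 0 = c * v 2 ∧
      v 2 = c * v 3 ∧ v 1 = c * v 4 := by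
  simp [funext_iff, Fin.forall_fin_succ, g2]

theorem eq_zero_of_g1_eq_smul_of_g2_eq_smul {v : V5} {c1 c2 : ℂ} (h1 : g1 v = c1 • v)
    (h2 : g2 v = c2 • v) : v = 0 := by
  by_contra hv
  have hc2 : c2 ≠ 0 := g2.eigenvalue_ne_zero hv h2
  obtain ⟨a0, a1, a2, a3, a4⟩ := g1_eq_smul_iff.mp h1
  obtain ⟨b0, -, b2, b3, b4⟩ := g2_eq_smul_iff.mp h2
  have hv0 : v 0 ≠ 0 := by
    intro hz0
    have hz3 : v 3 = 0 := by rw [b0, hz0, mul_zero]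
    have hz2 : v 2 = 0 := by simpa [hc2, hz0] using b2
    have hz1 : v 1 = 0 := by rw [a3, hz3, mul_zero]
    have hz4 : v 4 = 0 := by rw [a2, hz2, mul_zero]
    exact hv (funext fun i => by fin_cases i <;> assumption)
  obtain rfl : c1 = c2 := mul_right_cancel₀ hv0 (a0.symm.trans b0)
  have hc_cube : c1 ^ 3 = 1 := by
    refine mul_right_cancel₀ hv0 ?_
    linear_combination -b2 - c1 * b3 - c1 ^ 2 * b0
  have hv1 : v 1 ≠ 0 := by
    rw [a3, b0]
    exact mul_ne_zero hc2 (mul_ne_zero hc2 hv0)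
  -- v 1 = c * v 3 = v 2 and v 1 = c * v 4 = c ^ 2 * v 2
  have hc_sq : c1 ^ 2 = 1 := by
    refine mul_right_cancel₀ hv1 ?_
    linear_combination c1 ^ 2 * (a3 - b3) - c1 * a2 - b4
  obtain rfl : c1 = 1 := by linear_combination hc_cube - c1 * hc_sq
  exact hv0 (by linear_combination (-a4 + a1 - 4 * a0 - 3 * b3 - 2 * a2) / 6)

/-- g₁ and g₂ have no common eigenvector; hence the Γ-action on ℙ⁴, and in
particular on X₂, has no fixed points. -/
theorem statement13 :
    (¬ ∃ (v : V5) (c1 c2 : ℂ), v ≠ 0 ∧ g1 v = c1 • v ∧ g2 v = c2 • v) ∧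
    (¬ ∃ p : P4, ∀ γ ∈ Gamma, projMap γ p = p) ∧
    (¬ ∃ p ∈ X2, ∀ γ ∈ Gamma, projMap γ p = p) := by
  have no_fixed_point : ¬ ∃ p : P4, ∀ γ ∈ Gamma, projMap γ p = p := by
    rintro ⟨p, hp⟩
    obtain ⟨c1, h1⟩ :=
      Projectivization.exists_map_rep_eq_smul _ _ (hp g1 (Subgroup.subset_closure (by simp)))
    obtain ⟨c2, h2⟩ :=
      Projectivization.exists_map_rep_eq_smul _ _ (hp g2 (Subgroup.subset_closure (by simp)))
    exact p.rep_nonzero (eq_zero_of_g1_eq_smul_of_g2_eq_smul h1 h2)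
  exact ⟨fun ⟨_, _, _, hv, h1, h2⟩ => hv (eq_zero_of_g1_eq_smul_of_g2_eq_smul h1 h2),
    no_fixed_point, fun ⟨p, _, hp⟩ => no_fixed_point ⟨p, hp⟩⟩
end
end
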